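/- arXiv:0901.3509 — 2 statements merged into one kernel-verified Lean document; each statement's English description precedes it below -/
import Mathlib

section
/- Let (S,R) be a Catalan pair on X with ∼_R defined by x ∼_R y iff for all z, z is R-comparable with x iff z is R-comparable with y. If xSy and not x ∼_R y, then there exists a ∈ X such that a is R-comparable with x and aSy. -/
/-- A Catalan pair on a type `X`: `S` and `R` are strict orders, their
symmetrizations are disjoint and cover all pairs of distinct elements,
and `S ∘ R ⊆ R`. -/
def IsCatalanPair {X : Type*} (S R : X → X → Prop) : Prop :=
  (∀ x, ¬ S x x) ∧ (∀ x y z, S x y → S y z → S x z) ∧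
  (∀ x, ¬ R x x) ∧ (∀ x y z, R x y → R y z → R x z) ∧
  (∀ x y, x ≠ y → (R x y ∨ R y x) ∨ (S x y ∨ S y x)) ∧
  (∀ x y, (R x y ∨ R y x) → ¬ (S x y ∨ S y x)) ∧
  (∀ x y z, S x y → R y z → R x z)

/-!
Pick `z` witnessing `¬ x ∼_R y`. Since `S x y`, everything `R`-comparable with `y` is
`R`-comparable with `x` (a `z` with `R z y` that is `S`-comparable with `x` would contradict
`S x y` through transitivity of `S` or `S ∘ R ⊆ R`). So `z` is `R`-comparable with `x` but not
with `y`, hence `S`-comparable with `y`. Finally `S y z` is impossible: with `R z x` it gives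
`R y x`, with `R x z` it gives `S x z`. So `S z y`, and `a := z` works.
-/

namespace IsCatalanPair

variable {X : Type*} {S R : X → X → Prop} {x y z : X}

theorem S_trans (h : IsCatalanPair S R) (hxy : S x y) (hyz : S y z) : S x z :=
  h.2.1 x y z hxy hyz

theorem R_of_S_of_R (h : IsCatalanPair S R) (hxy : S x y) (hyz : R y z) : R x z :=
  h.2.2.2.2.2.2 x y z hxy hyz

theorem not_R_comparable_of_S (h : IsCatalanPair S R) (hxy : S x y) : ¬ (R x y ∨ R y x) :=
  fun hR => h.2.2.2.2.2.1 x y hR (Or.inl hxy)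

theorem S_comparable_of_not_R_comparable (h : IsCatalanPair S R) (hne : x ≠ y)
    (hR : ¬ (R x y ∨ R y x)) : S x y ∨ S y x :=
  (h.2.2.2.2.1 x y hne).resolve_left hR

theorem R_comparable_of_S_of_R_comparable (h : IsCatalanPair S R) (hxy : S x y)
    (hz : R z y ∨ R y z) : R z x ∨ R x z := by
  rcases hz with hzy | hyz
  · by_contra hzx
    have hne : z ≠ x := by
      rintro rfl
      exact h.not_R_comparable_of_S hxy (Or.inl hzy)
    rcases h.S_comparable_of_not_R_comparable hne hzx with hSzx | hSxz
    · exact h.not_R_comparable_of_S (h.S_trans hSzx hxy) (Or.inl hzy)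
    · exact h.not_R_comparable_of_S hxy (Or.inl (h.R_of_S_of_R hSxz hzy))
  · exact Or.inr (h.R_of_S_of_R hxy hyz)

theorem not_S_of_S_of_R_comparable (h : IsCatalanPair S R) (hxy : S x y)
    (hz : R z x ∨ R x z) : ¬ S y z := by
  intro hyz
  rcases hz with hzx | hxz
  · exact h.not_R_comparable_of_S hxy (Or.inr (h.R_of_S_of_R hyz hzx))
  · exact h.not_R_comparable_of_S (h.S_trans hxy hyz) (Or.inl hxz)

end IsCatalanPair

theorem catalan_pair_witness {X : Type*} (S R : X → X → Prop)
    (h : IsCatalanPair S R) (x y : X) (hS : S x y)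
    (hnsim : ¬ ∀ z, (R z x ∨ R x z) ↔ (R z y ∨ R y z)) :
    ∃ a : X, (R a x ∨ R x a) ∧ S a y := by
  obtain ⟨z, hz⟩ := not_forall.mp hnsim
  have hzx : R z x ∨ R x z := by
    by_contra hzx
    exact hz (iff_of_false hzx fun hzy => hzx (h.R_comparable_of_S_of_R_comparable hS hzy))
  have hzy : ¬ (R z y ∨ R y z) := fun hzy => hz (iff_of_true hzx hzy)
  have hne : z ≠ y := by
    rintro rfl
    exact h.not_R_comparable_of_S hS hzx.symm
  exact ⟨z, hzx, (h.S_comparable_of_not_R_comparable hne hzy).resolve_right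
    (h.not_S_of_S_of_R_comparable hS hzx)⟩
end

section
/- If (S₁,R) and (S₂,R) are two Catalan pairs on a finite set X with the same second component R, then they are isomorphic as Catalan pairs: there exists a bijection F: X → X with xRy ⟺ F(x)RF(y) and xS₁y ⟺ F(x)S₂F(y). -/
/-!
The axioms make `R ∪ S` a strict linear order; let `r` be its top. Every other element lies in
`A = {x | R x r}` or in `B = {x | S x r}`, every element of `A` is `R`-below every element of `B`,
and apart from these no relation crosses between `A`, `B` and `{r}`. Every `R`-maximal element
lies `R`-above all of `A`, so the tops of two pairs with the same `R` have the same `R`-down-set,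
and the transposition exchanging them is an automorphism of `R`; hence we may assume the tops
coincide. By induction the two pairs restricted to `A` and to `B` are isomorphic, and these
isomorphisms together with `r ↦ r` give the isomorphism.
-/

open Equiv

section

variable {X Y : Type*}

theorem Equiv.rel_swap_swap_iff [DecidableEq X] {R : X → X → Prop} {a b : X}
    (hdown : ∀ x, R x a ↔ R x b) (hup : ∀ x, R a x ↔ R b x) (x y : X) :
    R (swap a b x) (swap a b y) ↔ R x y := by
  have hleft : ∀ x z, R (swap a b x) z ↔ R x z := by
    intro x z
    rcases eq_or_ne x a with rfl | hxa
    · rw [swap_apply_left, hup]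
    rcases eq_or_ne x b with rfl | hxb
    · rw [swap_apply_right, hup]
    · rw [swap_apply_of_ne_of_ne hxa hxb]
  have hright : ∀ z y, R z (swap a b y) ↔ R z y := by
    intro z y
    rcases eq_or_ne y a with rfl | hya
    · rw [swap_apply_left, hdown]
    rcases eq_or_ne y b with rfl | hyb
    · rw [swap_apply_right, hdown]
    · rw [swap_apply_of_ne_of_ne hya hyb]
  exact (hleft x _).trans (hright x y)

def IsCatalanIso (S₁ S₂ R : X → X → Prop) (F : X ≃ X) : Prop :=
  (∀ x y, R x y ↔ R (F x) (F y)) ∧ (∀ x y, S₁ x y ↔ S₂ (F x) (F y))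

def IsCatalanTop (S R : X → X → Prop) (r : X) : Prop :=
  ∀ x, ¬ R r x ∧ ¬ S r x

namespace IsCatalanPair

variable {S R : X → X → Prop} {x y z : X}

theorem irrefl_S (h : IsCatalanPair S R) (x : X) : ¬ S x x := h.1 x

theorem trans_S (h : IsCatalanPair S R) : S x y → S y z → S x z := h.2.1 x y z

theorem irrefl_R (h : IsCatalanPair S R) (x : X) : ¬ R x x := h.2.2.1 x

theorem trans_R (h : IsCatalanPair S R) : R x y → R y z → R x z := h.2.2.2.1 x y z

theorem total (h : IsCatalanPair S R) (hxy : x ≠ y) : (R x y ∨ R y x) ∨ (S x y ∨ S y x) :=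
  h.2.2.2.2.1 x y hxy

theorem not_S_of_R (h : IsCatalanPair S R) (hxy : R x y) : ¬ S x y :=
  fun hS => h.2.2.2.2.2.1 x y (Or.inl hxy) (Or.inl hS)

theorem not_S_of_R' (h : IsCatalanPair S R) (hxy : R x y) : ¬ S y x :=
  fun hS => h.2.2.2.2.2.1 x y (Or.inl hxy) (Or.inr hS)

theorem trans_R_of_S (h : IsCatalanPair S R) : S x y → R y z → R x z := h.2.2.2.2.2.2 x y z

theorem trans_R_or_S (h : IsCatalanPair S R) (hxy : R x y ∨ S x y) (hyz : R y z ∨ S y z) :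
    R x z ∨ S x z := by
  rcases hxy with hxy | hxy <;> rcases hyz with hyz | hyz
  · exact Or.inl (h.trans_R hxy hyz)
  · have hxz : x ≠ z := by rintro rfl; exact h.not_S_of_R' hxy hyz
    rcases h.total hxz with (hxz | hzx) | (hxz | hzx)
    · exact Or.inl hxz
    · exact absurd hyz (h.not_S_of_R' (h.trans_R hzx hxy))
    · exact Or.inr hxz
    · exact absurd hyz (h.not_S_of_R' (h.trans_R_of_S hzx hxy))
  · exact Or.inl (h.trans_R_of_S hxy hyz)
  · exact Or.inr (h.trans_S hxy hyz)

theorem R_of_R_of_S (h : IsCatalanPair S R) (hx : R x z) (hy : S y z) : R x y := by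
  have hxy : x ≠ y := by rintro rfl; exact h.not_S_of_R hx hy
  rcases h.total hxy with (hxy | hyx) | (hxy | hyx)
  · exact hxy
  · exact absurd hy (h.not_S_of_R (h.trans_R hyx hx))
  · exact absurd (h.trans_S hxy hy) (h.not_S_of_R hx)
  · exact absurd hy (h.not_S_of_R (h.trans_R_of_S hyx hx))

theorem comap (h : IsCatalanPair S R) {f : Y → X} (hf : Function.Injective f) :
    IsCatalanPair (f ⁻¹'o S) (f ⁻¹'o R) :=
  ⟨fun _ => h.irrefl_S _, fun _ _ _ => h.trans_S, fun _ => h.irrefl_R _, fun _ _ _ => h.trans_R,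
    fun _ _ hxy => h.total (hf.ne hxy), fun _ _ => h.2.2.2.2.2.1 _ _,
    fun _ _ _ => h.trans_R_of_S⟩

theorem exists_isCatalanTop [Finite X] [Nonempty X] (h : IsCatalanPair S R) :
    ∃ r, IsCatalanTop S R r := by
  let Q : X → X → Prop := fun x y => R y x ∨ S y x
  have : IsTrans X Q := ⟨fun _ _ _ hxy hyz => h.trans_R_or_S hyz hxy⟩
  have : Std.Irrefl Q := ⟨fun x hx => hx.elim (h.irrefl_R x) (h.irrefl_S x)⟩
  obtain ⟨r, -, hr⟩ := (Finite.wellFounded_of_trans_of_irrefl Q).has_min Set.univ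
    ⟨Classical.arbitrary X, trivial⟩
  exact ⟨r, fun x => not_or.mp (hr x trivial)⟩

end IsCatalanPair

namespace IsCatalanTop

variable {S S₁ S₂ R : X → X → Prop} {x y r : X}

theorem eq_or_R_or_S (hr : IsCatalanTop S R r) (h : IsCatalanPair S R) (x : X) :
    x = r ∨ R x r ∨ S x r := by
  rcases eq_or_ne x r with hx | hx
  · exact Or.inl hx
  rcases h.total hx with (hxr | hrx) | (hxr | hrx)
  exacts [Or.inr (Or.inl hxr), absurd hrx (hr x).1, Or.inr (Or.inr hxr), absurd hrx (hr x).2]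

theorem R_of_R_of_maximal (hr : IsCatalanTop S R r) (h : IsCatalanPair S R) {m : X}
    (hm : ∀ y, ¬ R m y) (hx : R x r) : R x m := by
  rcases hr.eq_or_R_or_S h m with rfl | hmr | hmr
  · exact hx
  · exact absurd hmr (hm r)
  have hxm : x ≠ m := by rintro rfl; exact hm r hx
  rcases h.total hxm with (hxm | hmx) | (hxm | hmx)
  · exact hxm
  · exact absurd hmx (hm x)
  · exact absurd (h.trans_S hxm hmr) (h.not_S_of_R hx)
  · exact absurd (h.trans_R_of_S hmx hx) (hm r)

theorem R_iff_R {r₁ r₂ : X} (hr₁ : IsCatalanTop S₁ R r₁) (h1 : IsCatalanPair S₁ R)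
    (h2 : IsCatalanPair S₂ R) (hr₂ : IsCatalanTop S₂ R r₂) : R x r₁ ↔ R x r₂ :=
  ⟨hr₁.R_of_R_of_maximal h1 fun y => (hr₂ y).1, hr₂.R_of_R_of_maximal h2 fun y => (hr₁ y).1⟩

theorem S_iff_S (hr₁ : IsCatalanTop S₁ R r) (h1 : IsCatalanPair S₁ R)
    (h2 : IsCatalanPair S₂ R) (hr₂ : IsCatalanTop S₂ R r) : S₁ x r ↔ S₂ x r := by
  rcases eq_or_ne x r with rfl | hx
  · exact iff_of_false (h1.irrefl_S x) (h2.irrefl_S x)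
  by_cases hxr : R x r
  · exact iff_of_false (h1.not_S_of_R hxr) (h2.not_S_of_R hxr)
  · exact iff_of_true (((hr₁.eq_or_R_or_S h1 x).resolve_left hx).resolve_left hxr)
      (((hr₂.eq_or_R_or_S h2 x).resolve_left hx).resolve_left hxr)

theorem R_iff (hr : IsCatalanTop S R r) (h : IsCatalanPair S R) (x y : X) :
    R x y ↔ (R x r ∧ R y r ∧ R x y) ∨ (S x r ∧ S y r ∧ R x y) ∨ (R x r ∧ ¬ R y r) := by
  constructor
  · intro hxy
    rcases hr.eq_or_R_or_S h x with rfl | hx | hx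
    · exact absurd hxy (hr y).1
    · by_cases hy : R y r
      exacts [Or.inl ⟨hx, hy, hxy⟩, Or.inr (Or.inr ⟨hx, hy⟩)]
    · refine Or.inr (Or.inl ⟨hx, ?_, hxy⟩)
      rcases hr.eq_or_R_or_S h y with rfl | hy | hy
      · exact absurd hx (h.not_S_of_R hxy)
      · exact absurd hx (h.not_S_of_R (h.trans_R hxy hy))
      · exact hy
  · rintro (⟨-, -, hxy⟩ | ⟨-, -, hxy⟩ | ⟨hx, hy⟩)
    · exact hxy
    · exact hxy
    · rcases hr.eq_or_R_or_S h y with rfl | hy' | hy'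
      exacts [hx, absurd hy' hy, h.R_of_R_of_S hx hy']

theorem S_iff (hr : IsCatalanTop S R r) (h : IsCatalanPair S R) (x y : X) :
    S x y ↔ (R x r ∧ R y r ∧ S x y) ∨ (S x r ∧ S y r ∧ S x y) ∨ (S x r ∧ y = r) := by
  constructor
  · intro hxy
    rcases hr.eq_or_R_or_S h x with rfl | hx | hx
    · exact absurd hxy (hr y).2
    · refine Or.inl ⟨hx, ?_, hxy⟩
      rcases hr.eq_or_R_or_S h y with rfl | hy | hy
      · exact absurd hxy (h.not_S_of_R hx)
      · exact hy
      · exact absurd hxy (h.not_S_of_R (h.R_of_R_of_S hx hy))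
    · rcases hr.eq_or_R_or_S h y with rfl | hy | hy
      · exact Or.inr (Or.inr ⟨hx, rfl⟩)
      · exact absurd hx (h.not_S_of_R (h.trans_R_of_S hxy hy))
      · exact Or.inr (Or.inl ⟨hx, hy, hxy⟩)
  · rintro (⟨-, -, hxy⟩ | ⟨-, -, hxy⟩ | ⟨hx, rfl⟩)
    exacts [hxy, hxy, hx]

theorem isCatalanIso_of_blocks (hr₁ : IsCatalanTop S₁ R r) (h1 : IsCatalanPair S₁ R)
    (h2 : IsCatalanPair S₂ R) (hr₂ : IsCatalanTop S₂ R r) {F : X ≃ X} (hFr : F r = r)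
    (hmapA : ∀ x, R x r → R (F x) r) (hmapB : ∀ x, S₁ x r → S₂ (F x) r)
    (hisoA : ∀ x y, R x r → R y r → (R x y ↔ R (F x) (F y)) ∧ (S₁ x y ↔ S₂ (F x) (F y)))
    (hisoB : ∀ x y, S₁ x r → S₁ y r → (R x y ↔ R (F x) (F y)) ∧ (S₁ x y ↔ S₂ (F x) (F y))) :
    IsCatalanIso S₁ S₂ R F := by
  have hA_iff : ∀ x, R x r ↔ R (F x) r := by
    refine fun x => ⟨hmapA x, fun hFx => ?_⟩
    rcases hr₁.eq_or_R_or_S h1 x with rfl | hx | hx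
    exacts [absurd (hFr ▸ hFx) (h2.irrefl_R _), hx, absurd (hmapB x hx) (h2.not_S_of_R hFx)]
  have hB_iff : ∀ x, S₁ x r ↔ S₂ (F x) r := by
    refine fun x => ⟨hmapB x, fun hFx => ?_⟩
    rcases hr₁.eq_or_R_or_S h1 x with rfl | hx | hx
    exacts [absurd (hFr ▸ hFx) (h2.irrefl_S _), absurd hFx (h2.not_S_of_R (hmapA x hx)), hx]
  have hr_iff : ∀ y, y = r ↔ F y = r := fun y => (F.injective.eq_iff' hFr).symm
  refine ⟨fun x y => ?_, fun x y => ?_⟩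
  · rw [hr₁.R_iff h1 x y, hr₂.R_iff h2 (F x) (F y), ← hA_iff, ← hA_iff, ← hB_iff, ← hB_iff]
    exact or_congr (and_congr_right fun hx => and_congr_right fun hy => (hisoA x y hx hy).1)
      (or_congr (and_congr_right fun hx => and_congr_right fun hy => (hisoB x y hx hy).1) Iff.rfl)
  · rw [hr₁.S_iff h1 x y, hr₂.S_iff h2 (F x) (F y), ← hA_iff, ← hA_iff, ← hB_iff, ← hB_iff,
      ← hr_iff]
    exact or_congr (and_congr_right fun hx => and_congr_right fun hy => (hisoA x y hx hy).2)
      (or_congr (and_congr_right fun hx => and_congr_right fun hy => (hisoB x y hx hy).2) Iff.rfl)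

theorem exists_isCatalanIso (hr₁ : IsCatalanTop S₁ R r) (h1 : IsCatalanPair S₁ R)
    (h2 : IsCatalanPair S₂ R) (hr₂ : IsCatalanTop S₂ R r)
    {FA : Perm {x // R x r}} (hFA : IsCatalanIso (Subrel S₁ _) (Subrel S₂ _) (Subrel R _) FA)
    {FB : Perm {x // S₁ x r}} (hFB : IsCatalanIso (Subrel S₁ _) (Subrel S₂ _) (Subrel R _) FB) :
    ∃ F, IsCatalanIso S₁ S₂ R F := by
  classical
  set F := Perm.ofSubtype FA * Perm.ofSubtype FB
  have hFr : F r = r := by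
    rw [Perm.mul_apply, Perm.ofSubtype_apply_of_not_mem FB (h1.irrefl_S r),
      Perm.ofSubtype_apply_of_not_mem FA (h1.irrefl_R r)]
  have hFx_A : ∀ x (hx : R x r), F x = FA ⟨x, hx⟩ := fun x hx => by
    rw [Perm.mul_apply, Perm.ofSubtype_apply_of_not_mem FB (h1.not_S_of_R hx),
      Perm.ofSubtype_apply_of_mem FA hx]
  have hFx_B : ∀ x (hx : S₁ x r), F x = FB ⟨x, hx⟩ := fun x hx => by
    rw [Perm.mul_apply, Perm.ofSubtype_apply_of_mem FB hx,
      Perm.ofSubtype_apply_of_not_mem FA fun h => h1.not_S_of_R h (FB _).2]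
  refine ⟨F, hr₁.isCatalanIso_of_blocks h1 h2 hr₂ hFr (fun x hx => ?_) (fun x hx => ?_)
    (fun x y hx hy => ?_) (fun x y hx hy => ?_)⟩
  · exact hFx_A x hx ▸ (FA _).2
  · exact hFx_B x hx ▸ (hr₁.S_iff_S h1 h2 hr₂).1 (FB _).2
  · rw [hFx_A x hx, hFx_A y hy]
    exact ⟨hFA.1 ⟨x, hx⟩ ⟨y, hy⟩, hFA.2 ⟨x, hx⟩ ⟨y, hy⟩⟩
  · rw [hFx_B x hx, hFx_B y hy]
    exact ⟨hFB.1 ⟨x, hx⟩ ⟨y, hy⟩, hFB.2 ⟨x, hx⟩ ⟨y, hy⟩⟩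

end IsCatalanTop

end

theorem catalan_pair_determined_by_R {X : Type*} [Finite X]
    (S₁ S₂ R : X → X → Prop)
    (h1 : IsCatalanPair S₁ R) (h2 : IsCatalanPair S₂ R) :
    ∃ F : X ≃ X, (∀ x y, R x y ↔ R (F x) (F y)) ∧
      (∀ x y, S₁ x y ↔ S₂ (F x) (F y)) := by
  induction hn : Nat.card X using Nat.strong_induction_on generalizing X with
  | _ n ih =>
  rcases isEmpty_or_nonempty X with hX | hX
  · exact ⟨Equiv.refl X, isEmptyElim, isEmptyElim⟩
  classical
  obtain ⟨r, hr₁⟩ := h1.exists_isCatalanTop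
  obtain ⟨r₂, hr₂⟩ := h2.exists_isCatalanTop
  set σ := swap r r₂
  have hσ : ∀ x y, R (σ x) (σ y) ↔ R x y := rel_swap_swap_iff
    (fun x => hr₁.R_iff_R h1 h2 hr₂) (fun x => iff_of_false (hr₁ x).1 (hr₂ x).1)
  have h2' : IsCatalanPair (σ ⁻¹'o S₂) R := by
    simpa only [show σ ⁻¹'o R = R by ext x y; exact hσ x y] using h2.comap σ.injective
  have hr₂' : IsCatalanTop (σ ⁻¹'o S₂) R r := fun x =>
    ⟨(hr₁ x).1, by simpa only [Order.Preimage, σ, swap_apply_left] using (hr₂ (σ x)).2⟩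
  have hcard (p : X → Prop) (hp : ¬ p r) : Nat.card {x // p x} < n :=
    hn ▸ Finite.card_subtype_lt hp
  obtain ⟨FA, hFA⟩ := ih _ (hcard (R · r) (h1.irrefl_R r)) _ _ _
    (h1.comap Subtype.val_injective) (h2'.comap Subtype.val_injective) rfl
  obtain ⟨FB, hFB⟩ := ih _ (hcard (S₁ · r) (h1.irrefl_S r)) _ _ _
    (h1.comap Subtype.val_injective) (h2'.comap Subtype.val_injective) rfl
  obtain ⟨F, hFR, hFS⟩ := hr₁.exists_isCatalanIso h1 h2' hr₂' hFA hFB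
  exact ⟨F.trans σ, fun x y => (hFR x y).trans (hσ _ _).symm, hFS⟩
end
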